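/- If f : {0,...,k-1}ⁿ → ℝ is lattice submodular, then ELBO(ρ) = F(ρ) + Σᵢ H(ρᵢ) is DR-submodular on the interior of the product of simplices, i.e. all second partial derivatives ∂²ELBO/(∂ρ_{ij}∂ρ_{ℓm}) are ≤ 0 (including the diagonal ones), where F is the generalized multilinear extension and H the categorical entropy. -/

import Mathlib

open Finset

def catProb {n k : ℕ} [NeZero k] (ρ : Fin n → Fin k → ℝ) (i : Fin n) (x : Fin k) : ℝ :=
  if x = 0 then 1 - ∑ j ∈ Finset.univ.erase (0 : Fin k), ρ i j else ρ i x

def gme {n k : ℕ} [NeZero k] (f : (Fin n → Fin k) → ℝ) (ρ : Fin n → Fin k → ℝ) : ℝ :=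
  ∑ x : Fin n → Fin k, f x * ∏ i, catProb ρ i (x i)

/-- Entropy of the categorical distribution with free parameters `v j`, `j ≠ 0`. -/
noncomputable def catEntropy {k : ℕ} [NeZero k] (v : Fin k → ℝ) : ℝ :=
  -(∑ j ∈ Finset.univ.erase (0 : Fin k), v j * Real.log (v j)) -
    (1 - ∑ j ∈ Finset.univ.erase (0 : Fin k), v j) *
      Real.log (1 - ∑ j ∈ Finset.univ.erase (0 : Fin k), v j)

/-- The ELBO objective `F(ρ) + Σᵢ H(ρᵢ)`. -/
noncomputable def elbo {n k : ℕ} [NeZero k] (f : (Fin n → Fin k) → ℝ)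
    (ρ : Fin n → Fin k → ℝ) : ℝ :=
  gme f ρ + ∑ i, catEntropy (ρ i)

def updEntry {n k : ℕ} (ρ : Fin n → Fin k → ℝ) (i : Fin n) (j : Fin k) (t : ℝ) :
    Fin n → Fin k → ℝ :=
  fun i' j' => if i' = i ∧ j' = j then t else ρ i' j'

noncomputable def secondPartial {n k : ℕ} (G : (Fin n → Fin k → ℝ) → ℝ)
    (ρ : Fin n → Fin k → ℝ) (i : Fin n) (j : Fin k) (l : Fin n) (m : Fin k) : ℝ :=
  deriv (fun s =>
    deriv (fun t => G (updEntry (updEntry ρ l m s) i j t)) ((updEntry ρ l m s) i j)) (ρ l m)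

def csign {k : ℕ} [NeZero k] (j x : Fin k) : ℝ :=
  if x = j then 1 else if x = 0 then -1 else 0
lemma updEntry_row_ne {n k : ℕ} (ρ : Fin n → Fin k → ℝ) {i i' : Fin n} (j : Fin k) (t : ℝ)
    (h : i' ≠ i) : updEntry ρ i j t i' = ρ i' := by
  funext j'; simp [updEntry, h]
lemma updEntry_row_self {n k : ℕ} [DecidableEq (Fin k)] (ρ : Fin n → Fin k → ℝ) (i : Fin n)
    (j : Fin k) (t : ℝ) : updEntry ρ i j t i = Function.update (ρ i) j t := by
  funext j'; simp only [updEntry, Function.update, eq_rec_constant]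
  split_ifs with h1 h2 h2 <;> simp_all
lemma updEntry_overwrite {n k : ℕ} (ρ : Fin n → Fin k → ℝ) (i : Fin n) (j : Fin k) (s t : ℝ) :
    updEntry (updEntry ρ i j s) i j t = updEntry ρ i j t := by
  funext i' j'; simp [updEntry]; split_ifs <;> rfl
lemma updEntry_apply_self {n k : ℕ} (ρ : Fin n → Fin k → ℝ) (i : Fin n) (j : Fin k) (s : ℝ) :
    updEntry ρ i j s i j = s := by simp [updEntry]
lemma updEntry_apply_ne {n k : ℕ} (ρ : Fin n → Fin k → ℝ) (i : Fin n) (j : Fin k) (s : ℝ)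
    {i' : Fin n} {j' : Fin k} (h : ¬(i' = i ∧ j' = j)) : updEntry ρ i j s i' j' = ρ i' j' := by
  simp [updEntry, h]
lemma catProb_updEntry_ne {n k : ℕ} [NeZero k] (ρ : Fin n → Fin k → ℝ) {i i' : Fin n}
    (j : Fin k) (t : ℝ) (h : i' ≠ i) (x : Fin k) :
    catProb (updEntry ρ i j t) i' x = catProb ρ i' x := by
  simp [catProb, updEntry_row_ne ρ j t h]
lemma catProb_updEntry_self {n k : ℕ} [NeZero k] (ρ : Fin n → Fin k → ℝ) (i : Fin n)
    {j : Fin k} (hj : j ≠ 0) (t : ℝ) (x : Fin k) :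
    catProb (updEntry ρ i j t) i x = catProb ρ i x + (t - ρ i j) * csign j x := by
  have hrow : updEntry ρ i j t i = Function.update (ρ i) j t := updEntry_row_self ρ i j t
  rcases eq_or_ne x 0 with rfl | hx
  · have hmem : j ∈ (univ : Finset (Fin k)).erase 0 := by simp [hj]
    have hsum : ∑ j' ∈ (univ : Finset (Fin k)).erase 0, Function.update (ρ i) j t j'
        = t + ∑ j' ∈ ((univ : Finset (Fin k)).erase 0) \ {j}, ρ i j' :=
      Finset.sum_update_of_mem hmem (ρ i) t
    have hsum2 : ∑ j' ∈ ((univ : Finset (Fin k)).erase 0) \ {j}, ρ i j'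
        = (∑ j' ∈ (univ : Finset (Fin k)).erase 0, ρ i j') - ρ i j := by
      rw [Finset.sum_sdiff_eq_sub (by simpa using hmem)]
      simp
    simp only [catProb, hrow, if_pos rfl, csign, if_neg (Ne.symm hj), if_pos rfl, hsum, hsum2,
      if_true]
    ring
  · rcases eq_or_ne x j with rfl | hxj
    · simp [catProb, hrow, hx, csign]
    · simp [catProb, hrow, hx, hxj, csign, Function.update_of_ne hxj]
def bcoef {n k : ℕ} [NeZero k] (f : (Fin n → Fin k) → ℝ) (ρ : Fin n → Fin k → ℝ)
    (i : Fin n) (j : Fin k) : ℝ :=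
  ∑ x : Fin n → Fin k, f x * (csign j (x i) * ∏ i' ∈ univ.erase i, catProb ρ i' (x i'))
def dcoef {n k : ℕ} [NeZero k] (f : (Fin n → Fin k) → ℝ) (ρ : Fin n → Fin k → ℝ)
    (i : Fin n) (j : Fin k) (l : Fin n) (m : Fin k) : ℝ :=
  ∑ x : Fin n → Fin k, f x * (csign j (x i) * (csign m (x l) *
    ∏ i' ∈ (univ.erase i).erase l, catProb ρ i' (x i')))
lemma gme_updEntry {n k : ℕ} [NeZero k] (f : (Fin n → Fin k) → ℝ) (ρ : Fin n → Fin k → ℝ)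
    (i : Fin n) {j : Fin k} (hj : j ≠ 0) (t : ℝ) :
    gme f (updEntry ρ i j t) = gme f ρ + (t - ρ i j) * bcoef f ρ i j := by
  unfold gme bcoef
  rw [Finset.mul_sum, ← Finset.sum_add_distrib]
  refine Finset.sum_congr rfl fun x _ => ?_
  have h1 : ∏ i' , catProb (updEntry ρ i j t) i' (x i')
      = catProb (updEntry ρ i j t) i (x i) *
        ∏ i' ∈ univ.erase i, catProb (updEntry ρ i j t) i' (x i') :=
    (Finset.mul_prod_erase univ _ (mem_univ i)).symm
  have h2 : ∏ i' ∈ univ.erase i, catProb (updEntry ρ i j t) i' (x i')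
      = ∏ i' ∈ univ.erase i, catProb ρ i' (x i') :=
    Finset.prod_congr rfl fun i' hi' => catProb_updEntry_ne ρ j t (Finset.ne_of_mem_erase hi') _
  have h3 : ∏ i' , catProb ρ i' (x i')
      = catProb ρ i (x i) * ∏ i' ∈ univ.erase i, catProb ρ i' (x i') :=
    (Finset.mul_prod_erase univ _ (mem_univ i)).symm
  rw [h1, h2, catProb_updEntry_self ρ i hj, h3]
  ring
lemma bcoef_updEntry {n k : ℕ} [NeZero k] (f : (Fin n → Fin k) → ℝ) (ρ : Fin n → Fin k → ℝ)
    {i l : Fin n} (hil : i ≠ l) (j : Fin k) {m : Fin k} (hm : m ≠ 0) (s : ℝ) :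
    bcoef f (updEntry ρ l m s) i j = bcoef f ρ i j + (s - ρ l m) * dcoef f ρ i j l m := by
  unfold bcoef dcoef
  rw [Finset.mul_sum, ← Finset.sum_add_distrib]
  refine Finset.sum_congr rfl fun x _ => ?_
  have hl : l ∈ univ.erase i := by simp [Ne.symm hil]
  have h1 : ∏ i' ∈ univ.erase i, catProb (updEntry ρ l m s) i' (x i')
      = catProb (updEntry ρ l m s) l (x l) *
        ∏ i' ∈ (univ.erase i).erase l, catProb (updEntry ρ l m s) i' (x i') :=
    (Finset.mul_prod_erase _ _ hl).symm
  have h2 : ∏ i' ∈ (univ.erase i).erase l, catProb (updEntry ρ l m s) i' (x i')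
      = ∏ i' ∈ (univ.erase i).erase l, catProb ρ i' (x i') :=
    Finset.prod_congr rfl fun i' hi' => catProb_updEntry_ne ρ m s (Finset.ne_of_mem_erase hi') _
  have h3 : ∏ i' ∈ univ.erase i, catProb ρ i' (x i')
      = catProb ρ l (x l) * ∏ i' ∈ (univ.erase i).erase l, catProb ρ i' (x i') :=
    (Finset.mul_prod_erase _ _ hl).symm
  rw [h1, h2, catProb_updEntry_self ρ l hm, h3]
  ring
lemma csign_sum {k : ℕ} [NeZero k] {j : Fin k} (hj : j ≠ 0) (h : Fin k → ℝ) :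
    ∑ b : Fin k, csign j b * h b = h j - h 0 := by
  have : ∀ b : Fin k, csign j b * h b
      = (if b = j then h b else 0) - (if b = 0 then h b else 0) := by
    intro b
    rcases eq_or_ne b j with rfl | h1
    · simp [csign, hj]
    · rcases eq_or_ne b 0 with rfl | h2
      · simp [csign, h1]
      · simp [csign, h1, h2]
  simp only [this, Finset.sum_sub_distrib, Finset.sum_ite_eq', mem_univ, if_true]
lemma sum_reindex_two {n k : ℕ} [NeZero k] {i l : Fin n} (hil : i ≠ l)
    (g : (Fin n → Fin k) → ℝ) :
    ∑ x : Fin n → Fin k, g x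
      = ∑ x ∈ univ.filter (fun x : Fin n → Fin k => x i = 0 ∧ x l = 0),
          ∑ a : Fin k, ∑ b : Fin k,
            g (Function.update (Function.update x i a) l b) := by
  have hswap : ∀ (y : Fin n → Fin k) (a : Fin k) (b : Fin k),
      Function.update (Function.update y i a) l b
        = Function.update (Function.update y l b) i a :=
    fun y a b => Function.update_comm hil a b y
  have hpair : ∀ x : Fin n → Fin k, (∑ a : Fin k, ∑ b : Fin k,
      g (Function.update (Function.update x i a) l b))
      = ∑ q : Fin k × Fin k, g (Function.update (Function.update x i q.1) l q.2) :=
    fun x => (Fintype.sum_prod_type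
      (fun q : Fin k × Fin k => g (Function.update (Function.update x i q.1) l q.2))).symm
  simp only [hpair]
  have hprod := Finset.sum_product
    (univ.filter (fun x : Fin n → Fin k => x i = 0 ∧ x l = 0))
    (univ : Finset (Fin k × Fin k))
    (fun p : (Fin n → Fin k) × (Fin k × Fin k) =>
      g (Function.update (Function.update p.1 i p.2.1) l p.2.2))
  rw [← hprod]
  refine (Finset.sum_nbij'
    (s := (univ : Finset (Fin n → Fin k)))
    (t := (univ.filter (fun x : Fin n → Fin k => x i = 0 ∧ x l = 0)) ×ˢ
      (univ : Finset (Fin k × Fin k)))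
    (f := g)
    (g := fun p : (Fin n → Fin k) × (Fin k × Fin k) =>
      g (Function.update (Function.update p.1 i p.2.1) l p.2.2))
    (i := fun y => (Function.update (Function.update y i 0) l 0, (y i, y l)))
    (j := fun p => Function.update (Function.update p.1 i p.2.1) l p.2.2) ?_ ?_ ?_ ?_ ?_)
  · intro y _
    simp [Finset.mem_product, Function.update_apply, hil]
  · intro p _; exact mem_univ _
  · intro y _
    funext c
    rcases eq_or_ne c l with rfl | hcl
    · simp
    · rcases eq_or_ne c i with rfl | hci
      · simp [Function.update_apply, hcl, hil]
      · simp [Function.update_apply, hcl, hci]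
  · intro p hp
    obtain ⟨hp1, -⟩ := Finset.mem_product.1 hp
    obtain ⟨-, h1, h2⟩ := Finset.mem_filter.1 hp1
    have e1 : (Function.update (Function.update p.1 i p.2.1) l p.2.2) i = p.2.1 := by
      simp [Function.update_apply, hil]
    have e2 : (Function.update (Function.update p.1 i p.2.1) l p.2.2) l = p.2.2 := by simp
    refine Prod.ext ?_ ?_
    · funext c
      rcases eq_or_ne c l with rfl | hcl
      · simp [h2]
      · rcases eq_or_ne c i with rfl | hci
        · simp [Function.update_apply, hcl, hil, h1]
        · simp [Function.update_apply, hcl, hci]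
    · simp only [e1, e2]
  · intro y _
    have hid : Function.update (Function.update (Function.update (Function.update y i 0) l 0)
        i (y i)) l (y l) = y := by
      funext c
      rcases eq_or_ne c l with rfl | hcl
      · simp
      · rcases eq_or_ne c i with rfl | hci
        · simp [Function.update_apply, hcl, hil]
        · simp [Function.update_apply, hcl, hci]
    exact (congrArg g hid).symm
lemma catProb_pos {n k : ℕ} [NeZero k] {ρ : Fin n → Fin k → ℝ}
    (hpos : ∀ i j, j ≠ (0 : Fin k) → 0 < ρ i j)
    (hsum : ∀ i, ∑ j ∈ Finset.univ.erase (0 : Fin k), ρ i j < 1)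
    (i : Fin n) (x : Fin k) : 0 < catProb ρ i x := by
  unfold catProb
  split_ifs with h
  · linarith [hsum i]
  · exact hpos i x h
lemma dcoef_nonpos {n k : ℕ} [NeZero k] {f : (Fin n → Fin k) → ℝ}
    (hsub : ∀ x y : Fin n → Fin k, f (x ⊔ y) + f (x ⊓ y) ≤ f x + f y)
    {ρ : Fin n → Fin k → ℝ}
    (hpos : ∀ i j, j ≠ (0 : Fin k) → 0 < ρ i j)
    (hsum : ∀ i, ∑ j ∈ Finset.univ.erase (0 : Fin k), ρ i j < 1)
    {i l : Fin n} (hil : i ≠ l) {j m : Fin k} (hj : j ≠ 0) (hm : m ≠ 0) :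
    dcoef f ρ i j l m ≤ 0 := by
  unfold dcoef
  rw [sum_reindex_two hil]
  refine Finset.sum_nonpos fun x hx => ?_
  obtain ⟨-, h1, h2⟩ := Finset.mem_filter.1 hx
  set P : ℝ := ∏ i' ∈ (univ.erase i).erase l, catProb ρ i' (x i') with hP
  have hPnonneg : 0 ≤ P :=
    Finset.prod_nonneg fun i' _ => (catProb_pos hpos hsum i' (x i')).le
  have hw : ∀ a b : Fin k,
      (Function.update (Function.update x i a) l b) i = a ∧
      (Function.update (Function.update x i a) l b) l = b ∧
      ∏ i' ∈ (univ.erase i).erase l,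
        catProb ρ i' ((Function.update (Function.update x i a) l b) i') = P := by
    intro a b
    refine ⟨by simp [Function.update_apply, hil], by simp, ?_⟩
    refine Finset.prod_congr rfl fun i' hi' => ?_
    have hne1 : i' ≠ i := Finset.ne_of_mem_erase (Finset.mem_of_mem_erase hi')
    have hne2 : i' ≠ l := Finset.ne_of_mem_erase hi'
    rw [Function.update_of_ne hne2, Function.update_of_ne hne1]
  have hinner : ∀ a : Fin k, ∑ b : Fin k,
      f (Function.update (Function.update x i a) l b) *
        (csign j ((Function.update (Function.update x i a) l b) i) *
          (csign m ((Function.update (Function.update x i a) l b) l) *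
            ∏ i' ∈ (univ.erase i).erase l,
              catProb ρ i' ((Function.update (Function.update x i a) l b) i'))) =
      csign j a * ((f (Function.update (Function.update x i a) l m)
        - f (Function.update (Function.update x i a) l 0)) * P) := by
    intro a
    have : ∀ b : Fin k, f (Function.update (Function.update x i a) l b) *
        (csign j ((Function.update (Function.update x i a) l b) i) *
          (csign m ((Function.update (Function.update x i a) l b) l) *
            ∏ i' ∈ (univ.erase i).erase l,
              catProb ρ i' ((Function.update (Function.update x i a) l b) i'))) =
        csign m b * (csign j a * (f (Function.update (Function.update x i a) l b) * P)) := by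
      intro b
      obtain ⟨e1, e2, e3⟩ := hw a b
      rw [e1, e2, e3]; ring
    rw [Finset.sum_congr rfl fun b _ => this b, csign_sum hm]
    ring
  rw [Finset.sum_congr rfl fun a _ => hinner a, csign_sum hj]
  have hx00 : Function.update (Function.update x i (0 : Fin k)) l (0 : Fin k) = x := by
    funext c
    rcases eq_or_ne c l with rfl | hcl
    · simp [h2]
    · rcases eq_or_ne c i with rfl | hci
      · simp [Function.update_apply, hcl, h1]
      · simp [Function.update_apply, hcl, hci]
  have hsup : (Function.update (Function.update x i j) l 0) ⊔
      (Function.update (Function.update x i 0) l m)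
      = Function.update (Function.update x i j) l m := by
    funext c
    rcases eq_or_ne c l with rfl | hcl
    · simp [Pi.sup_apply, sup_eq_right.2 (Fin.zero_le m)]
    · rcases eq_or_ne c i with rfl | hci
      · simp [Pi.sup_apply, Function.update_apply, hcl, hil,
          sup_eq_left.2 (Fin.zero_le j)]
      · simp [Pi.sup_apply, Function.update_apply, hcl, hci]
  have hinf : (Function.update (Function.update x i j) l 0) ⊓
      (Function.update (Function.update x i 0) l m)
      = Function.update (Function.update x i 0) l 0 := by
    funext c
    rcases eq_or_ne c l with rfl | hcl
    · simp [Pi.inf_apply, inf_eq_left.2 (Fin.zero_le m)]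
    · rcases eq_or_ne c i with rfl | hci
      · simp [Pi.inf_apply, Function.update_apply, hcl, hil,
          inf_eq_right.2 (Fin.zero_le j)]
      · simp [Pi.inf_apply, Function.update_apply, hcl, hci]
  have hbr := hsub (Function.update (Function.update x i j) l 0)
    (Function.update (Function.update x i 0) l m)
  rw [hsup, hinf, hx00] at hbr
  rw [hx00]
  have : (f (Function.update (Function.update x i j) l m)
      - f (Function.update (Function.update x i j) l 0)) * P -
      (f (Function.update (Function.update x i 0) l m) - f x) * P
      = (f (Function.update (Function.update x i j) l m) + f x
        - (f (Function.update (Function.update x i j) l 0)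
          + f (Function.update (Function.update x i 0) l m))) * P := by ring
  rw [this]
  exact mul_nonpos_of_nonpos_of_nonneg (by linarith) hPnonneg
lemma catEntropy_update {k : ℕ} [NeZero k] (v : Fin k → ℝ) {j : Fin k} (hj : j ≠ 0) (t : ℝ) :
    catEntropy (Function.update v j t)
      = -(t * Real.log t)
        - ((1 - ∑ j' ∈ ((univ : Finset (Fin k)).erase 0).erase j, v j') - t) *
            Real.log ((1 - ∑ j' ∈ ((univ : Finset (Fin k)).erase 0).erase j, v j') - t)
        + (-(∑ j' ∈ ((univ : Finset (Fin k)).erase 0).erase j, v j' * Real.log (v j'))) := by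
  have hmem : j ∈ (univ : Finset (Fin k)).erase 0 := by simp [hj]
  have h1 : ∑ j' ∈ (univ : Finset (Fin k)).erase 0,
      Function.update v j t j' * Real.log (Function.update v j t j')
      = t * Real.log t + ∑ j' ∈ ((univ : Finset (Fin k)).erase 0).erase j,
          v j' * Real.log (v j') := by
    have : (fun j' => Function.update v j t j' * Real.log (Function.update v j t j'))
        = Function.update (fun j' => v j' * Real.log (v j')) j (t * Real.log t) := by
      funext j'
      rcases eq_or_ne j' j with rfl | h
      · simp
      · simp [Function.update_of_ne h]
    rw [this, Finset.sum_update_of_mem hmem, Finset.sdiff_singleton_eq_erase]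
  have h2 : ∑ j' ∈ (univ : Finset (Fin k)).erase 0, Function.update v j t j'
      = t + ∑ j' ∈ ((univ : Finset (Fin k)).erase 0).erase j, v j' := by
    rw [Finset.sum_update_of_mem hmem, Finset.sdiff_singleton_eq_erase]
  rw [catEntropy, h1, h2]
  ring_nf
lemma bcoef_congr {n k : ℕ} [NeZero k] (f : (Fin n → Fin k) → ℝ)
    {σ ρ : Fin n → Fin k → ℝ} {i : Fin n} (j : Fin k)
    (h : ∀ i', i' ≠ i → σ i' = ρ i') : bcoef f σ i j = bcoef f ρ i j := by
  unfold bcoef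
  refine Finset.sum_congr rfl fun x _ => ?_
  congr 1
  congr 1
  exact Finset.prod_congr rfl fun i' hi' => by
    rw [catProb, catProb, h i' (Finset.ne_of_mem_erase hi')]
lemma inner_eq {n k : ℕ} [NeZero k] (f : (Fin n → Fin k) → ℝ) (σ : Fin n → Fin k → ℝ)
    (i : Fin n) {j : Fin k} (hj : j ≠ 0) :
    (fun t => elbo f (updEntry σ i j t))
      = fun t => (gme f σ + (t - σ i j) * bcoef f σ i j)
        + (-(t * Real.log t)
          - ((1 - ∑ j' ∈ ((univ : Finset (Fin k)).erase 0).erase j, σ i j') - t) *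
              Real.log ((1 - ∑ j' ∈ ((univ : Finset (Fin k)).erase 0).erase j, σ i j') - t)
          + (-(∑ j' ∈ ((univ : Finset (Fin k)).erase 0).erase j, σ i j' * Real.log (σ i j'))))
        + ∑ i' ∈ (univ : Finset (Fin n)).erase i, catEntropy (σ i') := by
  funext t
  rw [elbo, gme_updEntry f σ i hj, ← Finset.add_sum_erase _
    (fun i' => catEntropy (updEntry σ i j t i')) (mem_univ i),
    updEntry_row_self, catEntropy_update (σ i) hj t,
    Finset.sum_congr rfl (fun i' hi' =>
      congrArg catEntropy (updEntry_row_ne σ j t (Finset.ne_of_mem_erase hi')))]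
  ring
lemma hasDerivAt_inner {n k : ℕ} [NeZero k] (f : (Fin n → Fin k) → ℝ)
    (σ : Fin n → Fin k → ℝ) (i : Fin n) {j : Fin k} (hj : j ≠ 0) {t : ℝ} (ht : t ≠ 0)
    (hA : (1 - ∑ j' ∈ ((univ : Finset (Fin k)).erase 0).erase j, σ i j') - t ≠ 0) :
    HasDerivAt (fun t => elbo f (updEntry σ i j t))
      (bcoef f σ i j +
        (Real.log ((1 - ∑ j' ∈ ((univ : Finset (Fin k)).erase 0).erase j, σ i j') - t)
          - Real.log t)) t := by
  rw [inner_eq f σ i hj]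
  set A : ℝ := 1 - ∑ j' ∈ ((univ : Finset (Fin k)).erase 0).erase j, σ i j' with hAdef
  have h1 : HasDerivAt (fun t : ℝ => gme f σ + (t - σ i j) * bcoef f σ i j)
      (1 * bcoef f σ i j) t :=
    (((hasDerivAt_id t).sub_const (σ i j)).mul_const _).const_add _
  have h2 : HasDerivAt (fun t : ℝ => t * Real.log t) (Real.log t + 1) t :=
    Real.hasDerivAt_mul_log ht
  have h3 : HasDerivAt (fun t : ℝ => (A - t) * Real.log (A - t))
      ((Real.log (A - t) + 1) * (-1)) t :=
    (Real.hasDerivAt_mul_log hA).comp t ((hasDerivAt_id t).const_sub A)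
  have h4 := (h1.add (((h2.neg.sub h3).add_const
    (-(∑ j' ∈ ((univ : Finset (Fin k)).erase 0).erase j, σ i j' * Real.log (σ i j')))))).add_const
    (∑ i' ∈ (univ : Finset (Fin n)).erase i, catEntropy (σ i'))
  refine h4.congr_deriv ?_
  ring

/-- if `f` is lattice submodular then `ELBO(ρ) = F(ρ) + Σᵢ H(ρᵢ)` is
DR-submodular on the interior of the product of simplices: all of its second partial
derivatives (including the diagonal ones) are nonpositive. -/
theorem stmt10 {n k : ℕ} [NeZero k] (f : (Fin n → Fin k) → ℝ)
    (hsub : ∀ x y : Fin n → Fin k, f (x ⊔ y) + f (x ⊓ y) ≤ f x + f y)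
    (ρ : Fin n → Fin k → ℝ)
    (hpos : ∀ i j, j ≠ (0 : Fin k) → 0 < ρ i j)
    (hsum : ∀ i, ∑ j ∈ Finset.univ.erase (0 : Fin k), ρ i j < 1)
    (i : Fin n) (j : Fin k) (hj : j ≠ 0) (l : Fin n) (m : Fin k) (hm : m ≠ 0) :
    secondPartial (elbo f) ρ i j l m ≤ 0 := by
  have hρij := hpos i j hj
  have hjmem : j ∈ (univ : Finset (Fin k)).erase 0 := by simp [hj]
  set A : ℝ := 1 - ∑ j' ∈ ((univ : Finset (Fin k)).erase 0).erase j, ρ i j' with hAdef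
  have hsplit : ∑ j' ∈ (univ : Finset (Fin k)).erase 0, ρ i j'
      = ρ i j + ∑ j' ∈ ((univ : Finset (Fin k)).erase 0).erase j, ρ i j' :=
    (Finset.add_sum_erase _ (ρ i) hjmem).symm
  have hAgt : ρ i j < A := by
    have := hsum i
    rw [hsplit] at this
    simp only [hAdef]
    linarith
  by_cases hil : i = l
  · subst hil
    by_cases hjm : j = m
    · -- diagonal case
      subst hjm
      rw [secondPartial]
      have hF : (fun s => deriv (fun t => elbo f (updEntry (updEntry ρ i j s) i j t))
            ((updEntry ρ i j s) i j))
          =ᶠ[nhds (ρ i j)] fun s => bcoef f ρ i j + (Real.log (A - s) - Real.log s) := by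
        filter_upwards [Ioo_mem_nhds hρij hAgt] with s hs
        simp only [updEntry_overwrite, updEntry_apply_self]
        exact (hasDerivAt_inner f ρ i hj (ne_of_gt hs.1) (ne_of_gt (sub_pos.2 hs.2))).deriv
      rw [hF.deriv_eq]
      have hd : HasDerivAt (fun s => bcoef f ρ i j + (Real.log (A - s) - Real.log s))
          ((A - ρ i j)⁻¹ * (-1) - (ρ i j)⁻¹) (ρ i j) :=
        ((((Real.hasDerivAt_log (ne_of_gt (sub_pos.2 hAgt))).comp (ρ i j)
          ((hasDerivAt_id (ρ i j)).const_sub A)).sub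
            (Real.hasDerivAt_log (ne_of_gt hρij))).const_add _)
      rw [hd.deriv]
      have h1 : 0 < (A - ρ i j)⁻¹ := inv_pos.2 (sub_pos.2 hAgt)
      have h2 : 0 < (ρ i j)⁻¹ := inv_pos.2 hρij
      linarith
    · -- same row, different column
      have hmj : m ∈ ((univ : Finset (Fin k)).erase 0).erase j :=
        Finset.mem_erase.2 ⟨fun h => hjm h.symm, by simp [hm]⟩
      set B : ℝ := 1 - ∑ j' ∈ (((univ : Finset (Fin k)).erase 0).erase j).erase m, ρ i j'
        with hBdef
      have hsplit2 : ∑ j' ∈ ((univ : Finset (Fin k)).erase 0).erase j, ρ i j'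
          = ρ i m + ∑ j' ∈ (((univ : Finset (Fin k)).erase 0).erase j).erase m, ρ i j' :=
        (Finset.add_sum_erase _ (ρ i) hmj).symm
      have hBpos : 0 < B - ρ i m - ρ i j := by
        have := hsum i
        rw [hsplit, hsplit2] at this
        simp only [hBdef]
        linarith
      rw [secondPartial]
      have hF : (fun s => deriv (fun t => elbo f (updEntry (updEntry ρ i m s) i j t))
            ((updEntry ρ i m s) i j))
          =ᶠ[nhds (ρ i m)] fun s => bcoef f ρ i j
            + (Real.log ((B - ρ i j) - s) - Real.log (ρ i j)) := by
        have hmem : Set.Iio (B - ρ i j) ∈ nhds (ρ i m) := Iio_mem_nhds (by linarith)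
        filter_upwards [hmem] with s hs
        have hpt : (updEntry ρ i m s) i j = ρ i j :=
          updEntry_apply_ne ρ i m s (fun h => hjm h.2)
        have hrow : updEntry ρ i m s i = Function.update (ρ i) m s :=
          updEntry_row_self ρ i m s
        have hAs : (1 - ∑ j' ∈ ((univ : Finset (Fin k)).erase 0).erase j,
            (updEntry ρ i m s) i j') = B - s := by
          rw [hrow, Finset.sum_update_of_mem hmj, Finset.sdiff_singleton_eq_erase, hBdef]
          ring
        have hne : (1 - ∑ j' ∈ ((univ : Finset (Fin k)).erase 0).erase j,
            (updEntry ρ i m s) i j') - (updEntry ρ i m s) i j ≠ 0 := by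
          rw [hAs, hpt]
          have : s < B - ρ i j := hs
          intro h; rw [sub_eq_zero] at h; linarith
        have hb : bcoef f (updEntry ρ i m s) i j = bcoef f ρ i j :=
          bcoef_congr f j (fun i' hi' => updEntry_row_ne ρ m s hi')
        rw [hpt]
        have hder := hasDerivAt_inner f (updEntry ρ i m s) i hj (ne_of_gt hρij)
          (by rw [hpt] at hne; exact hne)
        rw [hder.deriv, hb, hAs]
        rw [show B - s - ρ i j = B - ρ i j - s by ring]
      rw [hF.deriv_eq]
      have hd : HasDerivAt (fun s => bcoef f ρ i j
          + (Real.log ((B - ρ i j) - s) - Real.log (ρ i j)))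
          ((B - ρ i j - ρ i m)⁻¹ * (-1)) (ρ i m) := by
        have h1 : (B - ρ i j) - ρ i m ≠ 0 := by intro h; rw [sub_eq_zero] at h; linarith
        have h2 : HasDerivAt (fun s => Real.log ((B - ρ i j) - s))
            ((B - ρ i j - ρ i m)⁻¹ * (-1)) (ρ i m) := by
          exact ((Real.hasDerivAt_log h1).comp (ρ i m)
            ((hasDerivAt_id (ρ i m)).const_sub (B - ρ i j)))
        exact ((h2.sub_const (Real.log (ρ i j))).const_add _)
      rw [hd.deriv]
      have h1 : 0 < (B - ρ i j - ρ i m)⁻¹ := inv_pos.2 (by linarith)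
      nlinarith
  · -- different rows
    rw [secondPartial]
    have hF : (fun s => deriv (fun t => elbo f (updEntry (updEntry ρ l m s) i j t))
          ((updEntry ρ l m s) i j))
        = fun s => (s - ρ l m) * dcoef f ρ i j l m
          + (bcoef f ρ i j + (Real.log (A - ρ i j) - Real.log (ρ i j))) := by
      funext s
      have hrow : updEntry ρ l m s i = ρ i :=
        updEntry_row_ne ρ m s hil
      have hpt : (updEntry ρ l m s) i j = ρ i j :=
        updEntry_apply_ne ρ l m s (fun h => hil h.1)
      have hAs : (1 - ∑ j' ∈ ((univ : Finset (Fin k)).erase 0).erase j,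
          (updEntry ρ l m s) i j') = A := by rw [hrow]
      have hne : (1 - ∑ j' ∈ ((univ : Finset (Fin k)).erase 0).erase j,
          (updEntry ρ l m s) i j') - ρ i j ≠ 0 := by
        rw [hAs]; intro h; rw [sub_eq_zero] at h; linarith
      rw [hpt]
      have hder := hasDerivAt_inner f (updEntry ρ l m s) i hj (ne_of_gt hρij) hne
      rw [hder.deriv, hAs, bcoef_updEntry f ρ hil j hm]
      ring
    rw [hF]
    have hd : HasDerivAt (fun s => (s - ρ l m) * dcoef f ρ i j l m
        + (bcoef f ρ i j + (Real.log (A - ρ i j) - Real.log (ρ i j))))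
        (1 * dcoef f ρ i j l m) (ρ l m) :=
      (((hasDerivAt_id (ρ l m)).sub_const _).mul_const _).add_const _
    rw [hd.deriv, one_mul]
    exact dcoef_nonpos hsub hpos hsum hil hj hm
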